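/- arXiv:1208.2617 — 8 statements merged into one kernel-verified Lean document; each statement's English description precedes it below -/
import Mathlib

section
/- Let K be a characteristic vector for M and let I ⊆ E ⊆ V. Then f(K,I) − f(−K − Σ_{u∈E} 2u*, E∖I) = f(K,E). (Here −K − Σ_{u∈E} 2u* is the characteristic vector w ↦ −K(w) − 2·Σ_{u∈E}(u·w).) -/
open Finset

variable {V : Type*}

/-- `M` is negative definite: `xᵀMx < 0` for every nonzero `x ∈ ℝ^V`. -/
def NegDef [Fintype V] (M : V → V → ℤ) : Prop :=
  ∀ x : V → ℝ, x ≠ 0 → (∑ v, ∑ w, (M v w : ℝ) * x v * x w) < 0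

/-- `K` is a characteristic vector for `M`: `K(v) ≡ v·v (mod 2)` for all `v`. -/
def IsChar (M : V → V → ℤ) (K : V → ℤ) : Prop :=
  ∀ v, Int.ModEq 2 (K v) (M v v)

/-- `f(K, I) = (1/2)(Σ_{v∈I} K(v) + (Σ_{v∈I} v)·(Σ_{v∈I} v))` (an exact integer division
for characteristic `K`). -/
def latF (M : V → V → ℤ) (K : V → ℤ) (I : Finset V) : ℤ :=
  ((∑ v ∈ I, K v) + ∑ v ∈ I, ∑ w ∈ I, M v w) / 2

/-- `g(K, E) = min_{I ⊆ E} f(K, I)`. -/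
def latG (M : V → V → ℤ) (K : V → ℤ) (E : Finset V) : ℤ :=
  (E.powerset.image (latF M K)).min'
    ⟨_, Finset.mem_image_of_mem _ (Finset.empty_mem_powerset E)⟩

/-- `B_v(K, E) = min { f(K, I) : v ∈ I ⊆ E }` (for `v ∈ E`). -/
def latB [DecidableEq V] (M : V → V → ℤ) (K : V → ℤ) (E : Finset V) (v : V) : ℤ :=
  ((E.erase v).powerset.image (fun I => latF M K (insert v I))).min'
    ⟨_, Finset.mem_image_of_mem _ (Finset.empty_mem_powerset _)⟩

/-- `a_v(K,E) = A_v(K,E) - g(K,E) = g(K, E∖{v}) - g(K,E)`. -/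
def lata [DecidableEq V] (M : V → V → ℤ) (K : V → ℤ) (E : Finset V) (v : V) : ℤ :=
  latG M K (E.erase v) - latG M K E

/-- `b_v(K,E) = B_v(K,E) - g(K,E)`. -/
def latb [DecidableEq V] (M : V → V → ℤ) (K : V → ℤ) (E : Finset V) (v : V) : ℤ :=
  latB M K E v - latG M K E

section Aux

variable {V : Type*} [DecidableEq V]

lemma Q_even (M : V → V → ℤ) (hsym : ∀ v w, M v w = M w v) (I : Finset V) :
    2 ∣ ((∑ v ∈ I, ∑ w ∈ I, M v w) - ∑ v ∈ I, M v v) := by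
  classical
  induction I using Finset.induction_on with
  | empty => simp
  | @insert a I ha ih =>
    rw [Finset.sum_insert ha, Finset.sum_insert ha, Finset.sum_insert ha]
    have h1 : ∑ v ∈ I, ∑ w ∈ insert a I, M v w
        = (∑ v ∈ I, M v a) + ∑ v ∈ I, ∑ w ∈ I, M v w := by
      rw [← Finset.sum_add_distrib]
      exact Finset.sum_congr rfl fun v _ => Finset.sum_insert ha
    have h2 : ∑ v ∈ I, M v a = ∑ w ∈ I, M a w :=
      Finset.sum_congr rfl fun v _ => hsym v a
    obtain ⟨c, hc⟩ := ih
    refine ⟨(∑ w ∈ I, M a w) + c, ?_⟩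
    rw [h1, h2]
    omega

lemma num_even (M : V → V → ℤ) (hsym : ∀ v w, M v w = M w v) (K : V → ℤ)
    (hK : IsChar M K) (I : Finset V) :
    2 ∣ ((∑ v ∈ I, K v) + ∑ v ∈ I, ∑ w ∈ I, M v w) := by
  obtain ⟨c, hc⟩ := Q_even M hsym I
  have h : 2 ∣ ((∑ v ∈ I, K v) - ∑ v ∈ I, M v v) := by
    rw [← Finset.sum_sub_distrib]
    exact Finset.dvd_sum fun v _ => Int.ModEq.dvd (hK v).symm
  obtain ⟨d, hd⟩ := h
  exact ⟨d + c + ∑ v ∈ I, M v v, by omega⟩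

end Aux


/-- `f(K,I) − f(−K − Σ_{u∈E} 2u*, E∖I) = f(K,E)` for `I ⊆ E`. -/
theorem stmt1 [Fintype V] [DecidableEq V] (M : V → V → ℤ)
    (hsym : ∀ v w, M v w = M w v)
    (hoff : ∀ v w, v ≠ w → M v w = 0 ∨ M v w = 1)
    (hneg : NegDef M)
    (K : V → ℤ) (hK : IsChar M K) (I E : Finset V) (hIE : I ⊆ E) :
    latF M K I - latF M (fun w => -K w - 2 * ∑ u ∈ E, M u w) (E \ I) = latF M K E := by
  classical
  set B := E \ I with hBdef
  set K' : V → ℤ := fun w => -K w - 2 * ∑ u ∈ E, M u w with hK'def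
  have hK' : IsChar M K' := by
    intro v
    have := hK v
    unfold IsChar Int.ModEq at *
    simp only [hK'def]
    omega
  set C : ℤ := ∑ v ∈ I, ∑ w ∈ B, M v w with hCdef
  have hcomm : ∀ (S T : Finset V), ∑ v ∈ S, ∑ w ∈ T, M v w = ∑ v ∈ T, ∑ w ∈ S, M v w := by
    intro S T
    rw [Finset.sum_comm]
    exact Finset.sum_congr rfl fun v _ => Finset.sum_congr rfl fun w _ => hsym w v
  -- K sums
  have hKsum : (∑ v ∈ B, K v) + ∑ v ∈ I, K v = ∑ v ∈ E, K v := Finset.sum_sdiff hIE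
  -- Q decomposition
  have hinner : ∀ v, ∑ w ∈ E, M v w = (∑ w ∈ B, M v w) + ∑ w ∈ I, M v w :=
    fun v => (Finset.sum_sdiff hIE).symm
  have hQ : ∑ v ∈ E, ∑ w ∈ E, M v w
      = (∑ v ∈ B, ∑ w ∈ B, M v w) + (∑ v ∈ I, ∑ w ∈ I, M v w) + 2 * C := by
    have houter : ∑ v ∈ E, ∑ w ∈ E, M v w
        = (∑ v ∈ B, ∑ w ∈ E, M v w) + ∑ v ∈ I, ∑ w ∈ E, M v w :=
      (Finset.sum_sdiff hIE).symm
    have hBI : ∑ v ∈ B, ∑ w ∈ I, M v w = C := by rw [hCdef, hcomm]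
    calc ∑ v ∈ E, ∑ w ∈ E, M v w
        = (∑ v ∈ B, ((∑ w ∈ B, M v w) + ∑ w ∈ I, M v w))
          + ∑ v ∈ I, ((∑ w ∈ B, M v w) + ∑ w ∈ I, M v w) := by
          rw [houter]
          congr 1 <;> exact Finset.sum_congr rfl fun v _ => hinner v
      _ = _ := by
          rw [Finset.sum_add_distrib, Finset.sum_add_distrib, hBI, ← hCdef]
          ring
  -- the E-column sum over B
  have hX : ∑ w ∈ B, ∑ u ∈ E, M u w = (∑ v ∈ B, ∑ w ∈ B, M v w) + C := by
    have : ∀ w, ∑ u ∈ E, M u w = (∑ u ∈ B, M u w) + ∑ u ∈ I, M u w :=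
      fun w => (Finset.sum_sdiff hIE).symm
    calc ∑ w ∈ B, ∑ u ∈ E, M u w
        = ∑ w ∈ B, ((∑ u ∈ B, M u w) + ∑ u ∈ I, M u w) :=
          Finset.sum_congr rfl fun w _ => this w
      _ = (∑ w ∈ B, ∑ u ∈ B, M u w) + ∑ w ∈ B, ∑ u ∈ I, M u w :=
          Finset.sum_add_distrib
      _ = (∑ v ∈ B, ∑ w ∈ B, M v w) + C := by
          rw [hCdef]
          congr 1
          · exact Finset.sum_comm ..
          · exact Finset.sum_comm ..
  -- numerator of K' over B
  have hnB : (∑ v ∈ B, K' v) + ∑ v ∈ B, ∑ w ∈ B, M v w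
      = -(∑ v ∈ B, K v) - (∑ v ∈ B, ∑ w ∈ B, M v w) - 2 * C := by
    have : ∑ v ∈ B, K' v = -(∑ v ∈ B, K v) - 2 * ∑ w ∈ B, ∑ u ∈ E, M u w := by
      simp only [hK'def]
      rw [Finset.sum_sub_distrib, Finset.sum_neg_distrib, ← Finset.mul_sum]
    rw [this, hX]
    ring
  -- combine
  obtain ⟨a, ha⟩ := num_even M hsym K hK I
  obtain ⟨b, hb⟩ := num_even M hsym K' hK' B
  obtain ⟨c, hc⟩ := num_even M hsym K hK E
  unfold latF
  rw [ha, hb, hc]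
  rw [Int.mul_ediv_cancel_left _ two_ne_zero, Int.mul_ediv_cancel_left _ two_ne_zero,
    Int.mul_ediv_cancel_left _ two_ne_zero]
  omega
end

section
/- Let K be a characteristic vector for M, E ⊆ V, and let v₁, v₂ ∈ E be distinct. Then a_{v₁}(K,E) + b_{v₂}(K, E∖{v₁}) = b_{v₂}(K,E) + a_{v₁}(K + 2v₂*, E∖{v₂}). -/
open Finset

variable {V : Type*}

/-!
For `v ∉ I` one has `f(K, I ∪ {v}) = f(K + 2v*, I) + f(K, {v})`, so minimising over the sets
containing `v` is minimising `f(K + 2v*, ·)` over the subsets of `E ∖ {v}`: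
`B_v(K, E) = g(K + 2v*, E ∖ {v}) + f(K, {v})`. Substituting this for both `b`-terms, the
claimed identity reduces to `(E ∖ {v₁}) ∖ {v₂} = (E ∖ {v₂}) ∖ {v₁}`.
-/

lemma Finset.min'_image_add_const {ι β : Type*} [LinearOrder β] [Add β] [AddRightMono β]
    (s : Finset ι) (hs : s.Nonempty) (f : ι → β) (c : β) :
    (s.image fun i => f i + c).min' (hs.image _) = (s.image f).min' (hs.image f) + c := by
  rw [Monotone.map_finset_min' (fun _ _ h => add_le_add_left h c) (hs.image f)]
  simp only [image_image, Function.comp_def]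

lemma IsChar.two_dvd {M : V → V → ℤ} {K : V → ℤ} (hK : IsChar M K) (v : V) :
    2 ∣ K v + M v v := by
  have := (hK v).dvd
  omega

lemma latF_singleton (M : V → V → ℤ) (K : V → ℤ) (v : V) :
    latF M K {v} = (K v + M v v) / 2 := by
  simp [latF]

lemma latF_insert [DecidableEq V] {M : V → V → ℤ} (hsym : ∀ v w, M v w = M w v) {K : V → ℤ}
    {v : V} (hv : 2 ∣ K v + M v v) {I : Finset V} (hI : v ∉ I) :
    latF M K (insert v I) = latF M (fun w => K w + 2 * M v w) I + latF M K {v} := by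
  have hcol : ∑ u ∈ I, M u v = ∑ w ∈ I, M v w := sum_congr rfl fun u _ => hsym u v
  rw [latF_singleton, latF, latF, ← Int.add_ediv_of_dvd_right hv]
  congr 1
  simp only [sum_insert hI, sum_add_distrib, hcol, ← mul_sum]
  ring

lemma latB_eq_latG_add [DecidableEq V] {M : V → V → ℤ} (hsym : ∀ v w, M v w = M w v)
    {K : V → ℤ} (hK : IsChar M K) (E : Finset V) (v : V) :
    latB M K E v = latG M (fun w => K w + 2 * M v w) (E.erase v) + latF M K {v} := by
  have hshift : ∀ I ∈ (E.erase v).powerset,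
      latF M K (insert v I) = latF M (fun w => K w + 2 * M v w) I + latF M K {v} :=
    fun I hI => latF_insert hsym (hK.two_dvd v)
      fun hvI => notMem_erase v E (mem_powerset.mp hI hvI)
  simp only [latB, image_congr hshift]
  exact min'_image_add_const _ ⟨∅, empty_mem_powerset _⟩ _ _

theorem stmt3_general [DecidableEq V] (M : V → V → ℤ)
    (hsym : ∀ v w, M v w = M w v)
    (K : V → ℤ) (hK : IsChar M K) (E : Finset V) (v₁ v₂ : V) :
    lata M K E v₁ + latb M K (E.erase v₁) v₂
      = latb M K E v₂ + lata M (fun w => K w + 2 * M v₂ w) (E.erase v₂) v₁ := by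
  rw [lata, latb, latb, lata, latB_eq_latG_add hsym hK, latB_eq_latG_add hsym hK,
    erase_right_comm]
  ring

/-- `a_{v₁}(K,E) + b_{v₂}(K, E∖{v₁}) = b_{v₂}(K,E) + a_{v₁}(K + 2v₂*, E∖{v₂})`. -/
theorem stmt3 [Fintype V] [DecidableEq V] (M : V → V → ℤ)
    (hsym : ∀ v w, M v w = M w v)
    (hoff : ∀ v w, v ≠ w → M v w = 0 ∨ M v w = 1)
    (hneg : NegDef M)
    (K : V → ℤ) (hK : IsChar M K) (E : Finset V) (v₁ v₂ : V)
    (h1 : v₁ ∈ E) (h2 : v₂ ∈ E) (hne : v₁ ≠ v₂) :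
    lata M K E v₁ + latb M K (E.erase v₁) v₂
      = latb M K E v₂ + lata M (fun w => K w + 2 * M v₂ w) (E.erase v₂) v₁ :=
  stmt3_general M hsym K hK E v₁ v₂
end

section
/- The J-map is a chain map; concretely, for every characteristic vector K, every E ⊆ V and every v ∈ E, a_v(K,E) = b_v(−K − Σ_{u∈E} 2u*, E) and b_v(K,E) = a_v(−K − Σ_{u∈E} 2u*, E), where −K − Σ_{u∈E} 2u* is the characteristic vector w ↦ −K(w) − 2·Σ_{u∈E}(u·w). -/
open Finset

variable {V : Type*}

section AuxChain

variable {V : Type*}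

private def latN (M : V → V → ℤ) (K : V → ℤ) (I : Finset V) : ℤ :=
  (∑ v ∈ I, K v) + ∑ v ∈ I, ∑ w ∈ I, M v w

private lemma two_dvd_latN [DecidableEq V] (M : V → V → ℤ) (hsym : ∀ v w, M v w = M w v)
    (K : V → ℤ) (hK : ∀ v, Int.ModEq 2 (K v) (M v v)) (I : Finset V) :
    2 ∣ latN M K I := by
  induction I using Finset.induction with
  | empty => simp [latN]
  | @insert a I ha ih =>
    have h1 : ∑ v ∈ insert a I, ∑ w ∈ insert a I, M v w
        = M a a + ∑ w ∈ I, M a w + ∑ v ∈ I, (M v a + ∑ w ∈ I, M v w) := by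
      rw [Finset.sum_insert ha]
      simp [Finset.sum_insert ha, Finset.sum_add_distrib]
    have h2 : ∑ v ∈ I, M v a = ∑ w ∈ I, M a w :=
      Finset.sum_congr rfl fun x _ => hsym x a
    have hKa : 2 ∣ (M a a - K a) := (hK a).dvd
    simp only [latN, Finset.sum_insert ha, h1] at *
    rw [Finset.sum_add_distrib, h2]
    omega

private lemma latN_key [DecidableEq V] (M : V → V → ℤ) (hsym : ∀ v w, M v w = M w v)
    (K : V → ℤ) {I E : Finset V} (hIE : I ⊆ E) :
    latN M (fun w => -K w - 2 * ∑ u ∈ E, M u w) I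
      = latN M K (E \ I) - latN M K E := by
  have hsd : ∀ f : V → ℤ, ∑ x ∈ E \ I, f x = ∑ x ∈ E, f x - ∑ x ∈ I, f x := by
    intro f
    rw [eq_sub_iff_add_eq, Finset.sum_sdiff hIE]
  have comm : ∀ A B : Finset V, ∑ v ∈ A, ∑ w ∈ B, M v w = ∑ v ∈ B, ∑ w ∈ A, M v w := by
    intro A B
    rw [Finset.sum_comm]
    exact Finset.sum_congr rfl fun x _ => Finset.sum_congr rfl fun y _ => hsym y x
  simp only [latN, hsd, Finset.sum_sub_distrib, Finset.sum_neg_distrib, Finset.mul_sum]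
  have hc2 : ∑ x ∈ I, ∑ i ∈ E, 2 * M i x = 2 * ∑ v ∈ E, ∑ w ∈ I, M v w := by
    simp only [← Finset.mul_sum]
    rw [Finset.sum_comm]
  rw [hc2, comm I E]
  ring

private lemma latF_key [DecidableEq V] (M : V → V → ℤ) (hsym : ∀ v w, M v w = M w v)
    (K : V → ℤ) (hK : ∀ v, Int.ModEq 2 (K v) (M v v)) {I E : Finset V} (hIE : I ⊆ E) :
    latF M (fun w => -K w - 2 * ∑ u ∈ E, M u w) I
      = latF M K (E \ I) - latF M K E := by
  have h1 := two_dvd_latN M hsym K hK (E \ I)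
  have h2 := two_dvd_latN M hsym K hK E
  have h3 := latN_key M hsym K (I := I) (E := E) hIE
  simp only [latF]
  simp only [latN] at h1 h2 h3
  omega

private lemma latG_le (M : V → V → ℤ) (K : V → ℤ) {E I : Finset V} (hI : I ⊆ E) :
    latG M K E ≤ latF M K I :=
  Finset.min'_le _ _ (Finset.mem_image_of_mem _ (Finset.mem_powerset.2 hI))

private lemma exists_latG (M : V → V → ℤ) (K : V → ℤ) (E : Finset V) :
    ∃ I ⊆ E, latG M K E = latF M K I := by
  obtain ⟨I, hI, hEq⟩ := Finset.mem_image.1 (Finset.min'_mem _ _ : latG M K E ∈ _)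
  exact ⟨I, Finset.mem_powerset.1 hI, hEq.symm⟩

private lemma latB_le [DecidableEq V] (M : V → V → ℤ) (K : V → ℤ) {E I : Finset V} {v : V}
    (hI : I ⊆ E.erase v) : latB M K E v ≤ latF M K (insert v I) :=
  Finset.min'_le _ _ (Finset.mem_image_of_mem _ (Finset.mem_powerset.2 hI))

private lemma exists_latB [DecidableEq V] (M : V → V → ℤ) (K : V → ℤ) (E : Finset V) (v : V) :
    ∃ I ⊆ E.erase v, latB M K E v = latF M K (insert v I) := by
  obtain ⟨I, hI, hEq⟩ := Finset.mem_image.1 (Finset.min'_mem _ _ : latB M K E v ∈ _)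
  exact ⟨I, Finset.mem_powerset.1 hI, hEq.symm⟩

end AuxChain

/-- the `J`-map is a chain map: `a_v(K,E) = b_v(−K − Σ_{u∈E} 2u*, E)` and
`b_v(K,E) = a_v(−K − Σ_{u∈E} 2u*, E)`. -/
theorem stmt6 [Fintype V] [DecidableEq V] (M : V → V → ℤ)
    (hsym : ∀ v w, M v w = M w v)
    (hoff : ∀ v w, v ≠ w → M v w = 0 ∨ M v w = 1)
    (hneg : NegDef M)
    (K : V → ℤ) (hK : IsChar M K) (E : Finset V) (v : V) (hv : v ∈ E) :
    lata M K E v = latb M (fun w => -K w - 2 * ∑ u ∈ E, M u w) E v ∧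
    latb M K E v = lata M (fun w => -K w - 2 * ∑ u ∈ E, M u w) E v := by
  set K' : V → ℤ := fun w => -K w - 2 * ∑ u ∈ E, M u w with hK'def
  set c := latF M K E with hc
  have key : ∀ {I : Finset V}, I ⊆ E → latF M K' I = latF M K (E \ I) - c :=
    fun hIE => latF_key M hsym K hK hIE
  -- (1)
  have h1 : latG M K' E = latG M K E - c := by
    apply le_antisymm
    · obtain ⟨J, hJ, hGJ⟩ := exists_latG M K E
      have hle : latG M K' E ≤ latF M K' (E \ J) := latG_le M K' Finset.sdiff_subset
      rw [key Finset.sdiff_subset, Finset.sdiff_sdiff_eq_self hJ, ← hGJ] at hle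
      exact hle
    · obtain ⟨J, hJ, hGJ⟩ := exists_latG M K' E
      rw [hGJ, key hJ]
      have := latG_le M K (E := E) (I := E \ J) Finset.sdiff_subset
      omega
  -- (2)
  have h2 : latB M K' E v = latG M K (E.erase v) - c := by
    apply le_antisymm
    · obtain ⟨J, hJ, hGJ⟩ := exists_latG M K (E.erase v)
      have hJE : J ⊆ E := hJ.trans (Finset.erase_subset _ _)
      have hvJ : v ∉ J := fun h => (Finset.mem_erase.1 (hJ h)).1 rfl
      have hvEJ : v ∈ E \ J := Finset.mem_sdiff.2 ⟨hv, hvJ⟩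
      have hsub : (E \ J).erase v ⊆ E.erase v :=
        Finset.erase_subset_erase v Finset.sdiff_subset
      have hle := latB_le M K' hsub
      rw [Finset.insert_erase hvEJ, key Finset.sdiff_subset,
        Finset.sdiff_sdiff_eq_self hJE, ← hGJ] at hle
      exact hle
    · obtain ⟨I, hI, hBI⟩ := exists_latB M K' E v
      have hIE : insert v I ⊆ E :=
        Finset.insert_subset hv (hI.trans (Finset.erase_subset _ _))
      have hsub : E \ insert v I ⊆ E.erase v :=
        Finset.subset_erase.2 ⟨Finset.sdiff_subset, by simp⟩
      rw [hBI, key hIE]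
      have := latG_le M K (E := E.erase v) hsub
      omega
  -- (3)
  have h3 : latG M K' (E.erase v) = latB M K E v - c := by
    apply le_antisymm
    · obtain ⟨I, hI, hBI⟩ := exists_latB M K E v
      have hIE : insert v I ⊆ E :=
        Finset.insert_subset hv (hI.trans (Finset.erase_subset _ _))
      have hsub : E \ insert v I ⊆ E.erase v :=
        Finset.subset_erase.2 ⟨Finset.sdiff_subset, by simp⟩
      have hle : latG M K' (E.erase v) ≤ latF M K' (E \ insert v I) := latG_le M K' hsub
      rw [key Finset.sdiff_subset, Finset.sdiff_sdiff_eq_self hIE, ← hBI] at hle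
      exact hle
    · obtain ⟨J, hJ, hGJ⟩ := exists_latG M K' (E.erase v)
      have hJE : J ⊆ E := hJ.trans (Finset.erase_subset _ _)
      have hvJ : v ∉ J := fun h => (Finset.mem_erase.1 (hJ h)).1 rfl
      have hvEJ : v ∈ E \ J := Finset.mem_sdiff.2 ⟨hv, hvJ⟩
      have hsub : (E \ J).erase v ⊆ E.erase v :=
        Finset.erase_subset_erase v Finset.sdiff_subset
      have hle := latB_le M K hsub
      rw [Finset.insert_erase hvEJ] at hle
      rw [hGJ, key hJE]
      omega
  constructor <;> simp only [lata, latb] <;> omega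
end

section
/- The J-map preserves the Maslov grading: for every characteristic vector K and every E ⊆ V, 2·g(K,E) + (1/4)·K² = 2·g(−K − Σ_{v∈E} 2v*, E) + (1/4)·(−K − Σ_{v∈E} 2v*)², where for a function L : V → ℤ one sets L² = Σ_{v,w∈V} (M⁻¹)(v,w)·L(v)·L(w) ∈ ℚ. -/
/-!
Write `J = -K - 2M𝟙_E`. For `I ⊆ E` a direct expansion gives `f(J, I) = f(K, E \ I) - f(K, E)`,
so complementation inside `E` yields `g(J, E) = g(K, E) - f(K, E)`. On the other hand
`-J = K + M(2·𝟙_E)`, and since `M⁻¹` cancels `M` in the cross terms,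
`J² = K² + 4(K(𝟙_E) + 𝟙_E·𝟙_E) = K² + 8f(K, E)`. The two changes cancel in `2g + J²/4`.
-/

open Finset

variable {V : Type*}

/-- `L² = Σ_{v,w} (M⁻¹)(v,w) L(v) L(w) ∈ ℚ`. -/
noncomputable def sqQ [Fintype V] [DecidableEq V] (M : V → V → ℤ) (L : V → ℤ) : ℚ :=
  ∑ v, ∑ w, ((Matrix.of fun a b => (M a b : ℚ))⁻¹ v w) * (L v) * (L w)

def latJ (M : V → V → ℤ) (K : V → ℤ) (E : Finset V) : V → ℤ :=
  fun w => -K w - 2 * ∑ v ∈ E, M v w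

section Lattice

variable {M : V → V → ℤ} {K : V → ℤ}

lemma even_sum_sum_sub_sum_diag (hsym : ∀ v w, M v w = M w v) (I : Finset V) :
    Even ((∑ v ∈ I, ∑ w ∈ I, M v w) - ∑ v ∈ I, M v v) := by
  classical
  induction I using Finset.induction_on with
  | empty => simp
  | insert a I ha ih =>
    obtain ⟨c, hc⟩ := ih
    have hcol : ∑ v ∈ I, M v a = ∑ w ∈ I, M a w := sum_congr rfl fun v _ => hsym v a
    refine ⟨c + ∑ w ∈ I, M a w, ?_⟩
    simp only [sum_insert ha, sum_add_distrib]
    linear_combination hc + hcol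

lemma two_mul_latF (hsym : ∀ v w, M v w = M w v) (hK : IsChar M K) (I : Finset V) :
    2 * latF M K I = (∑ v ∈ I, K v) + ∑ v ∈ I, ∑ w ∈ I, M v w := by
  refine Int.mul_ediv_cancel' ?_
  obtain ⟨c, hc⟩ := even_sum_sum_sub_sum_diag hsym I
  have hdiag : 2 ∣ ∑ v ∈ I, (K v + M v v) :=
    dvd_sum fun v _ => by have := (hK v).dvd; omega
  rw [sum_add_distrib] at hdiag
  omega

lemma IsChar.latJ (hK : IsChar M K) (E : Finset V) : IsChar M (latJ M K E) := fun w => by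
  have := hK w
  simp only [_root_.latJ, Int.ModEq] at *
  omega

lemma latF_latJ [DecidableEq V] (hsym : ∀ v w, M v w = M w v) (hK : IsChar M K) {E I : Finset V}
    (hIE : I ⊆ E) : latF M (latJ M K E) I = latF M K (E \ I) - latF M K E := by
  have hquad : (∑ w ∈ I, latJ M K E w) + ∑ v ∈ I, ∑ w ∈ I, M v w
      = ((∑ v ∈ E \ I, K v) + ∑ v ∈ E \ I, ∑ w ∈ E \ I, M v w)
        - ((∑ v ∈ E, K v) + ∑ v ∈ E, ∑ w ∈ E, M v w) := by
    have hcomm : ∑ w ∈ I, ∑ v ∈ E, M v w = ∑ v ∈ E, ∑ w ∈ I, M v w := sum_comm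
    have hsymm : ∑ v ∈ I, ∑ w ∈ E, M v w = ∑ v ∈ E, ∑ w ∈ I, M v w := by
      rw [sum_comm]
      exact sum_congr rfl fun v _ => sum_congr rfl fun w _ => hsym w v
    simp only [_root_.latJ, sum_sub_distrib, ← mul_sum, sum_neg_distrib, sum_sdiff_eq_sub hIE]
    linear_combination (-2 : ℤ) * hcomm + hsymm
  have := two_mul_latF hsym (hK.latJ E) I
  have := two_mul_latF hsym hK (E \ I)
  have := two_mul_latF hsym hK E
  omega

lemma latG_le_latF {E I : Finset V} (hIE : I ⊆ E) : latG M K E ≤ latF M K I :=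
  min'_le _ _ (mem_image_of_mem _ (mem_powerset.2 hIE))

lemma exists_latF_eq_latG (E : Finset V) : ∃ I ⊆ E, latF M K I = latG M K E := by
  obtain ⟨I, hI, hmin⟩ := mem_image.1 (min'_mem (E.powerset.image (latF M K)) _)
  exact ⟨I, mem_powerset.1 hI, hmin⟩

lemma latG_latJ [DecidableEq V] (hsym : ∀ v w, M v w = M w v) (hK : IsChar M K) (E : Finset V) :
    latG M (latJ M K E) E = latG M K E - latF M K E := by
  apply le_antisymm
  · obtain ⟨I, hIE, hI⟩ := exists_latF_eq_latG (M := M) (K := K) E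
    have := latG_le_latF (M := M) (K := latJ M K E) (sdiff_subset (s := E) (t := I))
    rw [latF_latJ hsym hK sdiff_subset, Finset.sdiff_sdiff_eq_self hIE] at this
    omega
  · obtain ⟨I, hIE, hI⟩ := exists_latF_eq_latG (M := M) (K := latJ M K E) E
    rw [← hI, latF_latJ hsym hK hIE]
    have := latG_le_latF (M := M) (K := K) (sdiff_subset (s := E) (t := I))
    omega

end Lattice

section QuadraticForm

open Matrix

variable {n R : Type*} [Fintype n] [DecidableEq n] [CommRing R]

lemma dotProduct_inv_mulVec_add_mulVec {A : Matrix n n R} (hA : Aᵀ = A) (hdet : IsUnit A.det)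
    (k e : n → R) :
    (k + A *ᵥ e) ⬝ᵥ (A⁻¹ *ᵥ (k + A *ᵥ e))
      = k ⬝ᵥ (A⁻¹ *ᵥ k) + 2 * (k ⬝ᵥ e) + e ⬝ᵥ (A *ᵥ e) := by
  have hcross : (A *ᵥ e) ⬝ᵥ (A⁻¹ *ᵥ k) = k ⬝ᵥ e := by
    rw [dotProduct_mulVec, ← vecMul_transpose, hA, vecMul_vecMul, mul_nonsing_inv A hdet,
      vecMul_one, dotProduct_comm]
  rw [mulVec_add, mulVec_mulVec, nonsing_inv_mul A hdet, one_mulVec, add_dotProduct,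
    dotProduct_add, dotProduct_add, hcross, dotProduct_comm (A *ᵥ e) e]
  ring

end QuadraticForm

section SqQ

open Matrix

variable [Fintype V] [DecidableEq V] {M : V → V → ℤ}

lemma NegDef.det_ne_zero (hneg : NegDef M) : (Matrix.of fun a b => (M a b : ℚ)).det ≠ 0 := by
  intro hdet
  obtain ⟨x, hx0, hx⟩ := exists_mulVec_eq_zero_iff.2 hdet
  have hrow : ∀ v, ∑ w, (M v w : ℚ) * x w = 0 := fun v => by
    simpa [mulVec, dotProduct] using congrFun hx v
  have hxℝ : (fun v => (x v : ℝ)) ≠ 0 := fun h =>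
    hx0 (funext fun v => by simpa using congrFun h v)
  refine (hneg _ hxℝ).ne ?_
  calc ∑ v, ∑ w, (M v w : ℝ) * x v * x w
      = ∑ v, (x v : ℝ) * ((∑ w, (M v w : ℚ) * x w : ℚ) : ℝ) := by
        push_cast
        simp only [mul_sum]
        exact sum_congr rfl fun v _ => sum_congr rfl fun w _ => by ring
    _ = 0 := by simp [hrow]

lemma sqQ_eq_dotProduct (M : V → V → ℤ) (L : V → ℤ) :
    sqQ M L = (fun v => (L v : ℚ)) ⬝ᵥ
      ((Matrix.of fun a b => (M a b : ℚ))⁻¹ *ᵥ fun v => (L v : ℚ)) := by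
  simp only [sqQ, mulVec, dotProduct, mul_sum]
  exact sum_congr rfl fun v _ => sum_congr rfl fun w _ => by ring

lemma sqQ_latJ (hsym : ∀ v w, M v w = M w v)
    (hdet : IsUnit (Matrix.of fun a b => (M a b : ℚ)).det) (K : V → ℤ) (E : Finset V) :
    sqQ M (latJ M K E)
      = sqQ M K + 4 * ((∑ v ∈ E, (K v : ℚ)) + ∑ v ∈ E, ∑ w ∈ E, (M v w : ℚ)) := by
  rw [sqQ_eq_dotProduct, sqQ_eq_dotProduct]
  set A : Matrix V V ℚ := Matrix.of fun a b => (M a b : ℚ)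
  set k : V → ℚ := fun v => (K v : ℚ)
  set e : V → ℚ := fun v => if v ∈ E then 2 else 0
  have hA : Aᵀ = A := ext fun v w => by simp [A, hsym]
  have hAe : A *ᵥ e = fun w => 2 * ∑ v ∈ E, (M v w : ℚ) := funext fun w => by
    simp [A, e, mulVec, dotProduct, mul_sum, hsym w, mul_comm]
  have hJ : (fun w => (latJ M K E w : ℚ)) = -(k + A *ᵥ e) := by
    rw [hAe]
    funext w
    simp only [latJ, k, Pi.neg_apply, Pi.add_apply]
    push_cast
    ring
  have hke : k ⬝ᵥ e = 2 * ∑ v ∈ E, (K v : ℚ) := by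
    simp [k, e, dotProduct, mul_sum, mul_comm]
  have hee : e ⬝ᵥ (A *ᵥ e) = 4 * ∑ v ∈ E, ∑ w ∈ E, (M v w : ℚ) := by
    rw [hAe]
    norm_num [e, dotProduct, mul_sum, ← mul_assoc]
    exact sum_comm
  rw [hJ, mulVec_neg, dotProduct_neg, neg_dotProduct, neg_neg,
    dotProduct_inv_mulVec_add_mulVec hA hdet, hke, hee]
  ring

end SqQ

theorem stmt7_general [Fintype V] [DecidableEq V] (M : V → V → ℤ)
    (hsym : ∀ v w, M v w = M w v)
    (hneg : NegDef M)
    (K : V → ℤ) (hK : IsChar M K) (E : Finset V) :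
    2 * (latG M K E : ℚ) + (1 / 4) * sqQ M K
      = 2 * (latG M (fun w => -K w - 2 * ∑ v ∈ E, M v w) E : ℚ)
        + (1 / 4) * sqQ M (fun w => -K w - 2 * ∑ v ∈ E, M v w) := by
  have hF : (2 * latF M K E : ℚ) = (∑ v ∈ E, (K v : ℚ)) + ∑ v ∈ E, ∑ w ∈ E, (M v w : ℚ) := by
    exact_mod_cast two_mul_latF hsym hK E
  change _ = 2 * (latG M (latJ M K E) E : ℚ) + 1 / 4 * sqQ M (latJ M K E)
  rw [latG_latJ hsym hK E, sqQ_latJ hsym (isUnit_iff_ne_zero.2 hneg.det_ne_zero) K E]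
  push_cast
  linear_combination hF

/-- the `J`-map preserves the Maslov grading:
`2g(K,E) + (1/4)K² = 2g(−K − Σ_{v∈E} 2v*, E) + (1/4)(−K − Σ_{v∈E} 2v*)²`. -/
theorem stmt7 [Fintype V] [DecidableEq V] (M : V → V → ℤ)
    (hsym : ∀ v w, M v w = M w v)
    (hoff : ∀ v w, v ≠ w → M v w = 0 ∨ M v w = 1)
    (hneg : NegDef M)
    (K : V → ℤ) (hK : IsChar M K) (E : Finset V) :
    2 * (latG M K E : ℚ) + (1 / 4) * sqQ M K
      = 2 * (latG M (fun w => -K w - 2 * ∑ v ∈ E, M v w) E : ℚ)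
        + (1 / 4) * sqQ M (fun w => -K w - 2 * ∑ v ∈ E, M v w) :=
  stmt7_general M hsym hneg K hK E
end

section
/- For every characteristic vector K for M, every E ⊆ V and every framing m₀ ∈ ℤ of v₀, there is a unique characteristic vector L for M' with L restricted to V equal to K and a_{v₀}(L, E∪{v₀}) = b_{v₀}(L, E∪{v₀}) = 0 (computed with respect to M'); explicitly, L(v₀) = −m₀ + 2·g(K,E) − 2·g(K + 2v₀*, E), and this value is congruent to m₀ modulo 2. -/
open Finset

variable {V : Type*}

/-- The intersection matrix of the graph obtained by attaching the framing `m₀` to the extra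
vertex `v₀ = none`, joined to `G` by the edges recorded by `e`. -/
def Mext (M : V → V → ℤ) (e : V → ℤ) (m₀ : ℤ) : Option V → Option V → ℤ := fun x y =>
  match x, y with
  | some v, some w => M v w
  | some v, none => e v
  | none, some w => e w
  | none, none => m₀

/-- The coefficients of `Σ = v₀ + Σ_{v∈V} a_v·v`: `a = −M⁻¹e`, the unique solution of
`w·Σ = 0` for all `w ∈ V`. -/
noncomputable def sigmaC [Fintype V] [DecidableEq V] (M : V → V → ℤ) (e : V → ℤ) : V → ℚ :=
  fun v => -∑ u, ((Matrix.of fun a b => (M a b : ℚ))⁻¹ v u) * e u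

/-- The rational homology class `Σ = v₀ + Σ_{v∈V} a_v·v` (coordinates). -/
noncomputable def sigmaV [Fintype V] [DecidableEq V] (M : V → V → ℤ) (e : V → ℤ) :
    Option V → ℚ
  | none => 1
  | some v => sigmaC M e v

/-- The unique characteristic extension `L_{[K,E]}` of `K` over `v₀` (for the framing `m₀`)
with `a_{v₀}(L, E∪{v₀}) = b_{v₀}(L, E∪{v₀}) = 0`:
`L(v₀) = −m₀ + 2g(K,E) − 2g(K+2v₀*,E)`. -/
def LextV [DecidableEq V] (M : V → V → ℤ) (e : V → ℤ) (m₀ : ℤ) (K : V → ℤ) (E : Finset V) :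
    Option V → ℤ
  | some v => K v
  | none => -m₀ + 2 * latG M K E - 2 * latG M (fun w => K w + 2 * e w) E

/-- The Alexander grading `A([K,E]) = (1/2)(L_{[K,E]}(Σ) + Σ·Σ)`, computed with the
framing `m₀` on `v₀`. -/
noncomputable def AlexAt [Fintype V] [DecidableEq V] (M : V → V → ℤ) (e : V → ℤ) (m₀ : ℤ)
    (K : V → ℤ) (E : Finset V) : ℚ :=
  (1 / 2) * ((∑ x : Option V, (LextV M e m₀ K E x : ℚ) * sigmaV M e x)
    + ∑ x : Option V, ∑ y : Option V, (Mext M e m₀ x y : ℚ) * sigmaV M e x * sigmaV M e y)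

/-- The Alexander grading `A([K,E])` (independent of the framing; computed with framing `0`). -/
noncomputable def Alex [Fintype V] [DecidableEq V] (M : V → V → ℤ) (e : V → ℤ)
    (K : V → ℤ) (E : Finset V) : ℚ :=
  AlexAt M e 0 K E


/-!
Splitting the subsets of `E ∪ {v₀}` according to whether they contain `v₀` gives
`g(L, E ∪ {v₀}) = min(A, B)`, where `A = g(K, E)` is the minimum over subsets avoiding `v₀` and
`B` the minimum over those containing it; hence `a_{v₀} = b_{v₀} = 0` exactly when `A = B`.
Adding `v₀` to `I ⊆ E` adds `L(v₀) + m₀ + 2 Σ_{v ∈ I} e(v)` to twice `f`, so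
`B = (L(v₀) + m₀)/2 + g(K + 2v₀*, E)`, and `A = B` is a linear equation in `L(v₀)`.
-/
section Splitting

variable [DecidableEq V]

lemma latG_eq_min_latG_erase_latB (M : V → V → ℤ) (K : V → ℤ) {E : Finset V} {v : V}
    (hv : v ∈ E) : latG M K E = min (latG M K (E.erase v)) (latB M K E v) := by
  have h : E.powerset.image (latF M K) = (E.erase v).powerset.image (latF M K) ∪
      (E.erase v).powerset.image (fun I => latF M K (insert v I)) := by
    conv_lhs => rw [← insert_erase hv, powerset_insert, image_union, image_image]
    rfl
  simp only [latG, latB, h]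
  exact min'_union _ _

lemma lata_eq_zero_and_latb_eq_zero_iff (M : V → V → ℤ) (K : V → ℤ) {E : Finset V} {v : V}
    (hv : v ∈ E) :
    lata M K E v = 0 ∧ latb M K E v = 0 ↔ latG M K (E.erase v) = latB M K E v := by
  simp only [lata, latb, latG_eq_min_latG_erase_latB M K hv]
  omega

end Splitting

section Extension

variable (M : V → V → ℤ) (e : V → ℤ) (m₀ : ℤ) {K : V → ℤ} {L : Option V → ℤ}

lemma isChar_mext_iff (hL : ∀ v, L (some v) = K v) :
    IsChar (Mext M e m₀) L ↔ IsChar M K ∧ L none ≡ m₀ [ZMOD 2] := by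
  refine ⟨fun h => ⟨fun v => hL v ▸ h (some v), h none⟩, ?_⟩
  rintro ⟨hK, hnone⟩ (_ | v)
  · exact hnone
  · exact (hL v).symm ▸ hK v

variable [DecidableEq V]

lemma latF_mext_image_some (hL : ∀ v, L (some v) = K v) (J : Finset V) :
    latF (Mext M e m₀) L (J.image some) = latF M K J := by
  simp only [latF, sum_image (Option.some_injective V).injOn, hL]
  rfl

lemma latF_mext_insert_none (hL : ∀ v, L (some v) = K v) {q : ℤ} (hq : L none + m₀ = 2 * q)
    (J : Finset V) :
    latF (Mext M e m₀) L (insert none (J.image some)) =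
      q + latF M (fun w => K w + 2 * e w) J := by
  have hnone : (none : Option V) ∉ J.image some := by simp
  simp only [latF, sum_insert hnone, sum_image (Option.some_injective V).injOn, hL, Mext,
    sum_add_distrib, ← mul_sum]
  have half_shift : ∀ a b : ℤ, a = 2 * q + b → a / 2 = q + b / 2 := by omega
  exact half_shift _ _ (by linear_combination hq)

lemma latG_mext_image_some (hL : ∀ v, L (some v) = K v) (E : Finset V) :
    latG (Mext M e m₀) L (E.image some) = latG M K E := by
  simp only [latG, powerset_image, image_image, Function.comp_def,
    latF_mext_image_some M e m₀ hL]

lemma latB_mext_insert_none (hL : ∀ v, L (some v) = K v) {q : ℤ} (hq : L none + m₀ = 2 * q)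
    (E : Finset V) :
    latB (Mext M e m₀) L (insert none (E.image some)) none =
      q + latG M (fun w => K w + 2 * e w) E := by
  have hnone : (none : Option V) ∉ E.image some := by simp
  simp only [latB, erase_insert hnone, powerset_image, image_image, Function.comp_def,
    latF_mext_insert_none M e m₀ hL hq]
  refine Eq.trans ?_ (Monotone.map_finset_min' (f := (q + ·)) add_right_mono _).symm
  congr 1
  rw [image_image]
  rfl

lemma lata_mext_eq_zero_and_latb_mext_eq_zero_iff (hL : ∀ v, L (some v) = K v)
    (hnone : L none ≡ m₀ [ZMOD 2]) (E : Finset V) :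
    lata (Mext M e m₀) L (insert none (E.image some)) none = 0 ∧
        latb (Mext M e m₀) L (insert none (E.image some)) none = 0 ↔
      L none = -m₀ + 2 * latG M K E - 2 * latG M (fun w => K w + 2 * e w) E := by
  obtain ⟨q, hq⟩ : (2 : ℤ) ∣ L none + m₀ :=
    ⟨(L none + m₀) / 2, by unfold Int.ModEq at hnone; omega⟩
  rw [lata_eq_zero_and_latb_eq_zero_iff _ _ (mem_insert_self _ _), erase_insert (by simp),
    latG_mext_image_some M e m₀ hL, latB_mext_insert_none M e m₀ hL hq]
  omega

end Extension

theorem stmt8_general [DecidableEq V] (M : V → V → ℤ)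
    (e : V → ℤ)
    (K : V → ℤ) (hK : IsChar M K) (E : Finset V) (m₀ : ℤ) :
    (∃! L : Option V → ℤ,
        IsChar (Mext M e m₀) L ∧ (∀ v, L (some v) = K v) ∧
        lata (Mext M e m₀) L (insert none (E.image some)) none = 0 ∧
        latb (Mext M e m₀) L (insert none (E.image some)) none = 0) ∧
    (∀ L : Option V → ℤ,
        IsChar (Mext M e m₀) L → (∀ v, L (some v) = K v) →
        lata (Mext M e m₀) L (insert none (E.image some)) none = 0 →
        latb (Mext M e m₀) L (insert none (E.image some)) none = 0 →
        L none = -m₀ + 2 * latG M K E - 2 * latG M (fun w => K w + 2 * e w) E) ∧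
    Int.ModEq 2 (-m₀ + 2 * latG M K E - 2 * latG M (fun w => K w + 2 * e w) E) m₀ := by
  set E' := insert none (E.image some)
  set c := -m₀ + 2 * latG M K E - 2 * latG M (fun w => K w + 2 * e w) E
  have hparity : c ≡ m₀ [ZMOD 2] := by
    unfold Int.ModEq; omega
  have hcond : ∀ L, IsChar (Mext M e m₀) L → (∀ v, L (some v) = K v) →
      (lata (Mext M e m₀) L E' none = 0 ∧ latb (Mext M e m₀) L E' none = 0 ↔ L none = c) :=
    fun L hL hres => lata_mext_eq_zero_and_latb_mext_eq_zero_iff M e m₀ hres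
      ((isChar_mext_iff M e m₀ hres).1 hL).2 E
  have hchar : IsChar (Mext M e m₀) (LextV M e m₀ K E) :=
    (isChar_mext_iff M e m₀ fun _ => rfl).2 ⟨hK, hparity⟩
  refine ⟨⟨LextV M e m₀ K E, ⟨hchar, fun _ => rfl, (hcond _ hchar fun _ => rfl).2 rfl⟩, ?_⟩,
    fun L hL hres ha hb => (hcond L hL hres).1 ⟨ha, hb⟩, hparity⟩
  rintro L ⟨hL, hres, hab⟩
  funext x
  cases x with
  | none => exact (hcond L hL hres).1 hab
  | some v => exact hres v

/-- existence and uniqueness of the characteristic extension `L` of `K` over `v₀`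
with `a_{v₀}(L, E∪{v₀}) = b_{v₀}(L, E∪{v₀}) = 0`, its explicit value
`L(v₀) = −m₀ + 2g(K,E) − 2g(K+2v₀*,E)`, and the congruence `L(v₀) ≡ m₀ (mod 2)`. -/
theorem stmt8 [Fintype V] [DecidableEq V] (M : V → V → ℤ)
    (hsym : ∀ v w, M v w = M w v)
    (hoff : ∀ v w, v ≠ w → M v w = 0 ∨ M v w = 1)
    (hneg : NegDef M)
    (e : V → ℤ) (he : ∀ v, e v = 0 ∨ e v = 1)
    (K : V → ℤ) (hK : IsChar M K) (E : Finset V) (m₀ : ℤ) :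
    (∃! L : Option V → ℤ,
        IsChar (Mext M e m₀) L ∧ (∀ v, L (some v) = K v) ∧
        lata (Mext M e m₀) L (insert none (E.image some)) none = 0 ∧
        latb (Mext M e m₀) L (insert none (E.image some)) none = 0) ∧
    (∀ L : Option V → ℤ,
        IsChar (Mext M e m₀) L → (∀ v, L (some v) = K v) →
        lata (Mext M e m₀) L (insert none (E.image some)) none = 0 →
        latb (Mext M e m₀) L (insert none (E.image some)) none = 0 →
        L none = -m₀ + 2 * latG M K E - 2 * latG M (fun w => K w + 2 * e w) E) ∧
    Int.ModEq 2 (-m₀ + 2 * latG M K E - 2 * latG M (fun w => K w + 2 * e w) E) m₀ :=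
  stmt8_general M e K hK E m₀
end

section
/- The Alexander grading is independent of the framing of v₀: for every characteristic vector K for M and every E ⊆ V, the quantity (1/2)·(L_{[K,E]}(Σ) + Σ·Σ) computed using the framing m₀ on v₀ equals the same quantity computed using any other framing m₀' on v₀. -/
open Finset

variable {V : Type*}

/-- the Alexander grading `(1/2)(L_{[K,E]}(Σ) + Σ·Σ)` is independent of the
framing chosen on the distinguished vertex `v₀`. -/
theorem stmt9 [Fintype V] [DecidableEq V] (M : V → V → ℤ)
    (hsym : ∀ v w, M v w = M w v)
    (hoff : ∀ v w, v ≠ w → M v w = 0 ∨ M v w = 1)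
    (hneg : NegDef M)
    (e : V → ℤ) (he : ∀ v, e v = 0 ∨ e v = 1)
    (K : V → ℤ) (hK : IsChar M K) (E : Finset V) (m₀ m₀' : ℤ) :
    AlexAt M e m₀ K E = AlexAt M e m₀' K E := by
  simp only [AlexAt, Fintype.sum_option, LextV, Mext, sigmaV]
  push_cast
  ring
end

section
/- Let L be a characteristic vector for M' and H ⊆ V ∪ {v₀} with v₀ ∈ H. Then (1/2)·(L(Σ) + Σ·Σ) − A([L|_V, H∖{v₀}]) + a_{v₀}(L,H) = b_{v₀}(L,H); in particular, since b_{v₀}(L,H) ≥ 0, the Alexander grading of U^{a_{v₀}(L,H)}⊗[L|_V, H∖{v₀}] is at most (1/2)·(L(Σ) + Σ·Σ). -/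
open Finset

variable {V : Type*}

/-- The set of framed vertices of `H ⊆ V ∪ {v₀}` (the restriction of `H` to `V`). -/
def resV [Fintype V] [DecidableEq V] (H : Finset (Option V)) : Finset V :=
  univ.filter (fun v => some v ∈ H)


/-
Deleting `v₀` from `H` leaves the lattice of `M` on `E = H ∖ {v₀}`, while a subset `I ∋ v₀` of `H`
has `f(L, I) = (L(v₀) + m₀)/2 + f(K + 2e, I ∖ {v₀})` with `K = L|_V`. Hence
`a_{v₀}(L,H) = g(K,E) - g(L,H)` and `b_{v₀}(L,H) = (L(v₀) + m₀)/2 + g(K + 2e, E) - g(L,H)`.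
On the other side, `L` and `L_{[K,E]}` agree on `V`, and `Σ` has coefficient `1` at `v₀`, so the two
gradings differ only through `L(v₀) - L_{[K,E]}(v₀)` and the framing. The identity is then linear
arithmetic, and the inequality follows from `b_{v₀} ≥ 0`.
-/

section Lattice

variable {W : Type*} [DecidableEq W]

theorem IsChar.two_dvd_latF_num [DecidableEq V] {M : V → V → ℤ} (hsym : ∀ v w, M v w = M w v)
    {K : V → ℤ} (hK : IsChar M K) (I : Finset V) :
    2 ∣ (∑ v ∈ I, K v) + ∑ v ∈ I, ∑ w ∈ I, M v w := by
  induction I using Finset.induction_on with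
  | empty => simp
  | insert a s ha ih =>
    have hrow : ∑ v ∈ s, (M v a + ∑ w ∈ s, M v w)
        = (∑ v ∈ s, M a v) + ∑ v ∈ s, ∑ w ∈ s, M v w := by
      rw [sum_add_distrib, sum_congr rfl fun v _ => hsym v a]
    simp only [sum_insert ha, hrow]
    have ha' := (hK a).symm.dvd
    omega

theorem IsChar.add_two_mul {M : V → V → ℤ} {K : V → ℤ} (hK : IsChar M K) (c : V → ℤ) :
    IsChar M (fun v => K v + 2 * c v) := by
  intro v
  have := hK v
  simp only [Int.ModEq] at this ⊢
  omega

theorem latG_le_latB [DecidableEq V] {M : V → V → ℤ} {K : V → ℤ} {E : Finset V} {v : V}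
    (hv : v ∈ E) :
    latG M K E ≤ latB M K E v := by
  refine le_min' _ _ _ ?_
  simp only [mem_image, mem_powerset]
  rintro _ ⟨I, hI, rfl⟩
  refine min'_le _ _ (mem_image_of_mem _ (mem_powerset.mpr ?_))
  exact insert_subset hv (hI.trans (erase_subset v E))

theorem latb_nonneg [DecidableEq V] {M : V → V → ℤ} {K : V → ℤ} {E : Finset V} {v : V}
    (hv : v ∈ E) :
    0 ≤ latb M K E v :=
  sub_nonneg.mpr (latG_le_latB hv)

theorem latF_image {f : V → W} (hf : Function.Injective f) (M : W → W → ℤ) (L : W → ℤ)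
    (I : Finset V) :
    latF M L (I.image f) = latF (fun a b => M (f a) (f b)) (L ∘ f) I := by
  simp only [latF, sum_image hf.injOn, Function.comp]

theorem latG_image [DecidableEq V] {f : V → W} (hf : Function.Injective f) (M : W → W → ℤ)
    (L : W → ℤ) (E : Finset V) :
    latG M L (E.image f) = latG (fun a b => M (f a) (f b)) (L ∘ f) E := by
  have h : (E.image f).powerset.image (latF M L)
      = E.powerset.image (latF (fun a b => M (f a) (f b)) (L ∘ f)) := by
    simp only [powerset_image, image_image, Function.comp_def, latF_image hf]
  simp only [latG, h]

end Lattice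

section Extension

variable {M : V → V → ℤ} {e : V → ℤ} {m₀ : ℤ} {L : Option V → ℤ}

theorem image_some_resV [Fintype V] [DecidableEq V] (H : Finset (Option V)) :
    (resV H).image some = H.erase none := by
  ext (_ | v) <;> simp [resV]

theorem latG_Mext_image_some [DecidableEq V] (E : Finset V) :
    latG (Mext M e m₀) L (E.image some) = latG M (fun v => L (some v)) E :=
  latG_image (Option.some_injective V) _ _ E

theorem IsChar.of_Mext (hL : IsChar (Mext M e m₀) L) : IsChar M fun v => L (some v) :=
  fun v => hL (some v)

theorem IsChar.two_dvd_none_add (hL : IsChar (Mext M e m₀) L) : 2 ∣ L none + m₀ := by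
  have h := (hL none).dvd
  simp only [Mext] at h
  omega

theorem latF_Mext_insert_none [DecidableEq V] (hsym : ∀ v w, M v w = M w v)
    (hL : IsChar (Mext M e m₀) L) (I : Finset V) :
    latF (Mext M e m₀) L (insert none (I.image some))
      = (L none + m₀) / 2 + latF M (fun v => L (some v) + 2 * e v) I := by
  have hnone : (none : Option V) ∉ I.image some := by simp
  have hI := (hL.of_Mext.add_two_mul e).two_dvd_latF_num hsym I
  have hsplit : (∑ x ∈ insert none (I.image some), L x)
        + ∑ x ∈ insert none (I.image some), ∑ y ∈ insert none (I.image some), Mext M e m₀ x y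
      = (L none + m₀) + ((∑ v ∈ I, (L (some v) + 2 * e v)) + ∑ v ∈ I, ∑ w ∈ I, M v w) := by
    simp only [sum_insert hnone, sum_image (Option.some_injective V).injOn, Mext,
      sum_add_distrib, ← mul_sum]
    ring
  rw [latF, latF, hsplit, Int.add_ediv_of_dvd_left hL.two_dvd_none_add]

theorem latB_Mext_none [DecidableEq V] (hsym : ∀ v w, M v w = M w v)
    (hL : IsChar (Mext M e m₀) L) {H : Finset (Option V)} {E : Finset V}
    (hE : H.erase none = E.image some) :
    latB (Mext M e m₀) L H none
      = (L none + m₀) / 2 + latG M (fun v => L (some v) + 2 * e v) E := by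
  have h : (H.erase none).powerset.image (fun I => latF (Mext M e m₀) L (insert none I))
      = (E.powerset.image (latF M fun v => L (some v) + 2 * e v)).image
          ((L none + m₀) / 2 + ·) := by
    simp only [hE, powerset_image, image_image, Function.comp_def,
      latF_Mext_insert_none hsym hL]
  simp only [latB, latG, h, min'_image (add_right_mono (a := (L none + m₀) / 2))]

theorem half_pairing_sub_Alex [Fintype V] [DecidableEq V] (E : Finset V) :
    (1 / 2) * ((∑ x : Option V, (L x : ℚ) * sigmaV M e x)
        + ∑ x : Option V, ∑ y : Option V, (Mext M e m₀ x y : ℚ) * sigmaV M e x * sigmaV M e y)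
      - Alex M e (fun v => L (some v)) E
      = ((L none : ℚ) + m₀) / 2 - latG M (fun v => L (some v)) E
        + latG M (fun v => L (some v) + 2 * e v) E := by
  simp only [Alex, AlexAt, LextV, Fintype.sum_option, sigmaV, Mext]
  push_cast
  ring

end Extension

theorem stmt13_general [Fintype V] [DecidableEq V] (M : V → V → ℤ)
    (hsym : ∀ v w, M v w = M w v)
    (e : V → ℤ)
    (m₀ : ℤ) (L : Option V → ℤ) (hL : IsChar (Mext M e m₀) L)
    (H : Finset (Option V)) (hH : none ∈ H) :
    ((1 / 2) * ((∑ x : Option V, (L x : ℚ) * sigmaV M e x)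
          + ∑ x : Option V, ∑ y : Option V,
              (Mext M e m₀ x y : ℚ) * sigmaV M e x * sigmaV M e y)
        - Alex M e (fun v => L (some v)) (resV (H.erase none))
        + (lata (Mext M e m₀) L H none : ℚ)
      = (latb (Mext M e m₀) L H none : ℚ)) ∧
    (-(lata (Mext M e m₀) L H none : ℚ)
        + Alex M e (fun v => L (some v)) (resV (H.erase none))
      ≤ (1 / 2) * ((∑ x : Option V, (L x : ℚ) * sigmaV M e x)
          + ∑ x : Option V, ∑ y : Option V,
              (Mext M e m₀ x y : ℚ) * sigmaV M e x * sigmaV M e y)) := by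
  set E := resV (H.erase none)
  have hE : H.erase none = E.image some := by rw [image_some_resV, erase_idem]
  have hG : latG (Mext M e m₀) L (H.erase none) = latG M (fun v => L (some v)) E := by
    rw [hE, latG_Mext_image_some]
  have hB := latB_Mext_none hsym hL hE
  have hhalf : (((L none + m₀) / 2 : ℤ) : ℚ) = ((L none : ℚ) + m₀) / 2 := by
    rw [Int.cast_div hL.two_dvd_none_add two_ne_zero]
    push_cast
    ring
  have hAlex := half_pairing_sub_Alex (M := M) (e := e) (m₀ := m₀) (L := L) E
  have hb : (0 : ℚ) ≤ latb (Mext M e m₀) L H none := by exact_mod_cast latb_nonneg hH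
  simp only [lata, latb, hG, hB] at hb ⊢
  push_cast at hb ⊢
  constructor <;> linarith

/-- for `L` characteristic for `M'` and `v₀ ∈ H`,
`(1/2)(L(Σ) + Σ·Σ) − A([L|_V, H∖{v₀}]) + a_{v₀}(L,H) = b_{v₀}(L,H)`; in particular the
Alexander grading of `U^{a_{v₀}(L,H)}⊗[L|_V, H∖{v₀}]` is at most `(1/2)(L(Σ) + Σ·Σ)`. -/
theorem stmt13 [Fintype V] [DecidableEq V] (M : V → V → ℤ)
    (hsym : ∀ v w, M v w = M w v)
    (hoff : ∀ v w, v ≠ w → M v w = 0 ∨ M v w = 1)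
    (hneg : NegDef M)
    (e : V → ℤ) (he : ∀ v, e v = 0 ∨ e v = 1)
    (m₀ : ℤ) (L : Option V → ℤ) (hL : IsChar (Mext M e m₀) L)
    (H : Finset (Option V)) (hH : none ∈ H) :
    ((1 / 2) * ((∑ x : Option V, (L x : ℚ) * sigmaV M e x)
          + ∑ x : Option V, ∑ y : Option V,
              (Mext M e m₀ x y : ℚ) * sigmaV M e x * sigmaV M e y)
        - Alex M e (fun v => L (some v)) (resV (H.erase none))
        + (lata (Mext M e m₀) L H none : ℚ)
      = (latb (Mext M e m₀) L H none : ℚ)) ∧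
    (-(lata (Mext M e m₀) L H none : ℚ)
        + Alex M e (fun v => L (some v)) (resV (H.erase none))
      ≤ (1 / 2) * ((∑ x : Option V, (L x : ℚ) * sigmaV M e x)
          + ∑ x : Option V, ∑ y : Option V,
              (Mext M e m₀ x y : ℚ) * sigmaV M e x * sigmaV M e y)) :=
  stmt13_general M hsym e m₀ L hL H hH
end

section
/- The homology of the U = 1 lattice complex is one-dimensional: the 𝔽-chain complex C̄ with C̄_k spanned by the pairs [K,E] with K ∈ Char(𝔰), E ⊆ V, |E| = k, and differential ∂̄[K,E] = Σ_{v∈E} ([K, E∖{v}] + [K + 2v*, E∖{v}]) satisfies H_0(C̄) ≅ 𝔽 and H_k(C̄) = 0 for all k > 0. -/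
open Finset

variable {V : Type*}

/-- Membership in the spin^c equivalence class `Char(𝔰)` determined by `K₀`:
`K = K₀ + Σ_v 2 n_v v*`. -/
def CharCl [Fintype V] (M : V → V → ℤ) (K₀ : V → ℤ) (K : V → ℤ) : Prop :=
  ∃ n : V → ℤ, ∀ w, K w = K₀ w + 2 * ∑ v, n v * M v w

lemma charCl_addDual [Fintype V] [DecidableEq V] (M : V → V → ℤ) (K₀ K : V → ℤ)
    (h : CharCl M K₀ K) (v : V) : CharCl M K₀ (fun w => K w + 2 * M v w) := by
  obtain ⟨n, hn⟩ := h
  refine ⟨fun u => n u + if u = v then 1 else 0, fun w => ?_⟩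
  have hs : ∑ u, (n u + if u = v then 1 else 0) * M u w
      = (∑ u, n u * M u w) + M v w := by
    simp [add_mul, Finset.sum_add_distrib, ite_mul]
  show K w + 2 * M v w = K₀ w + 2 * ∑ u, (n u + if u = v then 1 else 0) * M u w
  rw [hn w, hs]
  ring

/-- The `U = 1` chain group in δ-grading `k`: the `𝔽`-vector space spanned by the pairs
`[K,E]` with `K ∈ Char(𝔰)` and `|E| = k`. -/
abbrev Cbar [Fintype V] (M : V → V → ℤ) (K₀ : V → ℤ) (k : ℕ) : Type _ :=
  ({K : V → ℤ // CharCl M K₀ K} × {E : Finset V // E.card = k}) →₀ ZMod 2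

/-- The `U = 1` differential `∂̄[K,E] = Σ_{v∈E} ([K,E∖{v}] + [K+2v*,E∖{v}])`. -/
noncomputable def dbar [Fintype V] [DecidableEq V] (M : V → V → ℤ) (K₀ : V → ℤ) (k : ℕ) :
    Cbar M K₀ (k + 1) →ₗ[ZMod 2] Cbar M K₀ k :=
  Finsupp.lift (Cbar M K₀ k) (ZMod 2)
    ({K : V → ℤ // CharCl M K₀ K} × {E : Finset V // E.card = k + 1}) fun g =>
    ∑ v ∈ g.2.1.attach,
      (Finsupp.single
          (g.1, ⟨g.2.1.erase v.1, by rw [Finset.card_erase_of_mem v.2, g.2.2]; omega⟩) 1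
       + Finsupp.single
          (⟨fun w => g.1.1 w + 2 * M v.1 w, charCl_addDual M K₀ g.1.1 g.1.2 v.1⟩,
           ⟨g.2.1.erase v.1, by rw [Finset.card_erase_of_mem v.2, g.2.2]; omega⟩) 1)

/-!
Since `M` is negative definite, `n ↦ K₀ + Σ_v 2 n_v v*` is a bijection `ℤ^V ≃ Char(𝔰)`, and under
it `C̄` becomes the mod-2 cellular chain complex of the decomposition of `ℝ^V` into unit cubes:
`[K, E]` is the cube at `n` spanned by the directions in `E`, and `[K, E∖{v}]`, `[K + 2v*, E∖{v}]`
are its two faces transverse to `v`. This complex is contractible. For a vertex `u`, sweeping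
each cube along the `u`-axis to the hyperplane `n_u = 0` is a chain homotopy between the identity
and the collapse onto that hyperplane; composing these homotopies over all of `V` contracts the
complex onto the single point `[0, ∅]`, which is detected in degree `0` by the augmentation.
-/

open Function

lemma Finsupp.lhom_ext_single_one {R X W : Type*} [Semiring R] [AddCommMonoid W] [Module R W]
    {φ ψ : (X →₀ R) →ₗ[R] W} (h : ∀ a, φ (Finsupp.single a 1) = ψ (Finsupp.single a 1)) :
    φ = ψ :=
  Finsupp.lhom_ext' fun a => LinearMap.ext_ring (h a)

namespace Function

variable {ι R : Type*} [DecidableEq ι] [AddZeroClass R]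

lemma update_add_single_self (f : ι → R) (i : ι) (a b : R) :
    update (f + Pi.single i a) i b = update f i b := by
  ext j; by_cases hj : j = i
  · subst hj; simp
  · simp [hj]

lemma update_add_single_of_ne {i j : ι} (h : j ≠ i) (f : ι → R) (a b : R) :
    update (f + Pi.single j a) i b = update f i b + Pi.single j a := by
  ext k; by_cases hk : k = i
  · subst hk; simp [h.symm]
  · simp [hk]

lemma update_add_single_same (f : ι → R) (i : ι) (a b : R) :
    update f i a + Pi.single i b = update f i (a + b) := by
  ext j; by_cases hj : j = i
  · subst hj; simp
  · simp [hj]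

end Function

section PathEdges

variable {G : Type*} [AddCommGroup G] [Module (ZMod 2) G]

-- `m ∈ pathEdges t` stands for the unit segment `[m, m + 1]`; together they form the path from
-- `0` to `t`.
noncomputable def pathEdges (t : ℤ) : Finset ℤ := Ico (min 0 t) (max 0 t)

lemma sum_pathEdges_add_sum_pathEdges_succ (f : ℤ → G) (t : ℤ) :
    ∑ m ∈ pathEdges t, f m + ∑ m ∈ pathEdges (t + 1), f m = f t := by
  rcases le_or_gt 0 t with ht | ht
  · have h : pathEdges (t + 1) = insert t (pathEdges t) := by
      ext; simp only [pathEdges, mem_Ico, mem_insert]; omega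
    rw [h, sum_insert (by simp [pathEdges, ht]), add_left_comm, ZModModule.add_self, add_zero]
  · have h : pathEdges t = insert t (pathEdges (t + 1)) := by
      ext; simp only [pathEdges, mem_Ico, mem_insert]; omega
    rw [h, sum_insert (by simp [pathEdges, ht]), add_assoc, ZModModule.add_self, add_zero]

lemma sum_pathEdges_add_apply_succ (f : ℤ → G) (t : ℤ) :
    ∑ m ∈ pathEdges t, (f m + f (m + 1)) = f 0 + f t := by
  have step := sum_pathEdges_add_sum_pathEdges_succ (fun m => f m + f (m + 1))
  induction t using Int.induction_on with
  | zero => simp [pathEdges, ZModModule.add_self]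
  | succ t ih =>
    have h := step t
    rw [ih] at h
    rw [eq_sub_of_add_eq' h, ZModModule.sub_eq_add, add_comm,
      ZModModule.add_add_add_cancel]
  | pred t ih =>
    have h := step (-t - 1)
    rw [sub_add_cancel, ih] at h
    rw [eq_sub_of_add_eq h, ZModModule.sub_eq_add, add_comm (f 0),
      ZModModule.add_add_add_cancel, add_comm]

end PathEdges

namespace LatticeCube

variable [DecidableEq V]

def zeroOn (S : Finset V) (n : V → ℤ) : V → ℤ := fun w => if w ∈ S then 0 else n w

@[simp]
lemma zeroOn_empty (n : V → ℤ) : zeroOn ∅ n = n := rfl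

@[simp]
lemma zeroOn_univ [Fintype V] (n : V → ℤ) : zeroOn univ n = 0 := by
  ext; simp [zeroOn]

lemma zeroOn_add_single_of_mem {S : Finset V} {v : V} (hv : v ∈ S) (n : V → ℤ) (a : ℤ) :
    zeroOn S (n + Pi.single v a) = zeroOn S n := by
  ext w
  by_cases hw : w = v
  · subst hw; simp [zeroOn, hv]
  · simp [zeroOn, hw]

lemma zeroOn_add_single_of_notMem {S : Finset V} {v : V} (hv : v ∉ S) (n : V → ℤ) (a : ℤ) :
    zeroOn S (n + Pi.single v a) = zeroOn S n + Pi.single v a := by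
  ext w
  by_cases hw : w = v
  · subst hw; simp [zeroOn, hv]
  · simp [zeroOn, hw]

-- `(n, E)` is the unit cube with lowest vertex `n` spanned by the coordinate directions in `E`;
-- cubes of all dimensions are collected in one module.
abbrev Chains (V : Type*) : Type _ := ((V → ℤ) × Finset V) →₀ ZMod 2

noncomputable def boundary : Chains V →ₗ[ZMod 2] Chains V :=
  Finsupp.lift _ _ _ fun c => ∑ v ∈ c.2,
    (Finsupp.single (c.1, c.2.erase v) 1 + Finsupp.single (c.1 + Pi.single v 1, c.2.erase v) 1)

noncomputable def sweep (u : V) : Chains V →ₗ[ZMod 2] Chains V :=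
  Finsupp.lift _ _ _ fun c => if u ∈ c.2 then 0 else
    ∑ m ∈ pathEdges (c.1 u), Finsupp.single (update c.1 u m, insert u c.2) 1

noncomputable def collapse (S : Finset V) : Chains V →ₗ[ZMod 2] Chains V :=
  Finsupp.lift _ _ _ fun c =>
    if Disjoint c.2 S then Finsupp.single (zeroOn S c.1, c.2) 1 else 0

@[simp]
lemma boundary_single (n : V → ℤ) (E : Finset V) :
    boundary (Finsupp.single (n, E) 1) = ∑ v ∈ E,
      (Finsupp.single (n, E.erase v) 1 + Finsupp.single (n + Pi.single v 1, E.erase v) 1) := by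
  simp [boundary]

@[simp]
lemma sweep_single (u : V) (n : V → ℤ) (E : Finset V) :
    sweep u (Finsupp.single (n, E) 1) = if u ∈ E then 0 else
      ∑ m ∈ pathEdges (n u), Finsupp.single (update n u m, insert u E) 1 := by
  simp [sweep]

@[simp]
lemma collapse_single (S : Finset V) (n : V → ℤ) (E : Finset V) :
    collapse S (Finsupp.single (n, E) 1) =
      if Disjoint E S then Finsupp.single (zeroOn S n, E) 1 else 0 := by
  simp [collapse]

lemma collapse_comp_boundary (S : Finset V) :
    collapse S ∘ₗ boundary = boundary ∘ₗ collapse S := by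
  refine Finsupp.lhom_ext_single_one fun ⟨n, E⟩ => ?_
  simp only [LinearMap.comp_apply, boundary_single, collapse_single, map_sum, map_add]
  split_ifs with hE
  · rw [boundary_single]
    refine sum_congr rfl fun v hv => ?_
    have hvS : v ∉ S := disjoint_left.mp hE hv
    have hEv : Disjoint (E.erase v) S := hE.mono_left (erase_subset v E)
    rw [if_pos hEv, if_pos hEv, zeroOn_add_single_of_notMem hvS]
  · rw [map_zero]
    refine sum_eq_zero fun v hv => ?_
    by_cases hvS : v ∈ S
    · rw [zeroOn_add_single_of_mem hvS, ZModModule.add_self]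
    · have hEv : ¬ Disjoint (E.erase v) S := by
        rwa [disjoint_erase_comm, erase_eq_of_notMem hvS]
      rw [if_neg hEv, if_neg hEv, add_zero]

lemma collapse_singleton_comp_collapse (u : V) (S : Finset V) :
    collapse {u} ∘ₗ collapse S = collapse (insert u S) := by
  refine Finsupp.lhom_ext_single_one fun ⟨n, E⟩ => ?_
  have hn : zeroOn {u} (zeroOn S n) = zeroOn (insert u S) n := by
    ext w; by_cases hw : w = u <;> simp [zeroOn, hw]
  by_cases hE : Disjoint E S <;>
    simp [hE, hn, disjoint_insert_right]

lemma zeroOn_singleton (n : V → ℤ) (u : V) : zeroOn {u} n = update n u 0 := by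
  ext w; by_cases hw : w = u
  · subst hw; simp [zeroOn]
  · simp [hw, zeroOn]

lemma sweep_boundary_single_of_mem {u : V} {E : Finset V} (hu : u ∈ E) (n : V → ℤ) :
    sweep u (boundary (Finsupp.single (n, E) 1)) = Finsupp.single (n, E) 1 := by
  rw [boundary_single, map_sum, sum_eq_single_of_mem u hu fun v hv hvu => ?_]
  · simp only [map_add, sweep_single, notMem_erase, if_false, insert_erase hu,
      update_add_single_self, Pi.add_apply, Pi.single_eq_same]
    rw [sum_pathEdges_add_sum_pathEdges_succ (fun m => Finsupp.single (update n u m, E) 1),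
      update_eq_self]
  · have : u ∈ E.erase v := mem_erase.mpr ⟨Ne.symm hvu, hu⟩
    simp [this]

lemma boundary_sweep_add_sweep_boundary_single_of_notMem {u : V} {E : Finset V} (hu : u ∉ E)
    (n : V → ℤ) :
    boundary (sweep u (Finsupp.single (n, E) 1)) + sweep u (boundary (Finsupp.single (n, E) 1))
      = Finsupp.single (n, E) 1 + Finsupp.single (update n u 0, E) 1 := by
  set face : ℤ → V → Finsupp ((V → ℤ) × Finset V) (ZMod 2) := fun m v =>
    Finsupp.single (update n u m, insert u (E.erase v)) 1
      + Finsupp.single (update n u m + Pi.single v 1, insert u (E.erase v)) 1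
  have h₁ : boundary (sweep u (Finsupp.single (n, E) 1)) =
      Finsupp.single (update n u 0, E) 1 + Finsupp.single (n, E) 1
        + ∑ m ∈ pathEdges (n u), ∑ v ∈ E, face m v := by
    have hcube : ∀ m, boundary (Finsupp.single (update n u m, insert u E) 1) =
        Finsupp.single (update n u m, E) 1 + Finsupp.single (update n u (m + 1), E) 1
          + ∑ v ∈ E, face m v := by
      intro m
      rw [boundary_single, sum_insert hu, erase_insert hu, update_add_single_same]
      refine congrArg _ (sum_congr rfl fun v hv => ?_)
      rw [erase_insert_of_ne (ne_of_mem_of_not_mem hv hu).symm]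
    rw [sweep_single, if_neg hu, map_sum, sum_congr rfl fun m _ => hcube m, sum_add_distrib,
      sum_pathEdges_add_apply_succ (fun m => Finsupp.single (update n u m, E) 1), update_eq_self]
  have h₂ : sweep u (boundary (Finsupp.single (n, E) 1)) =
      ∑ m ∈ pathEdges (n u), ∑ v ∈ E, face m v := by
    rw [boundary_single, map_sum, sum_comm]
    refine sum_congr rfl fun v hv => ?_
    have hvu : v ≠ u := ne_of_mem_of_not_mem hv hu
    simp [hu, hvu, update_add_single_of_ne hvu, face, sum_add_distrib]
  rw [h₁, h₂, add_assoc, ZModModule.add_self, add_zero, add_comm]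

lemma boundary_comp_sweep_add_sweep_comp_boundary (u : V) :
    boundary ∘ₗ sweep u + sweep u ∘ₗ boundary = LinearMap.id + collapse {u} := by
  refine Finsupp.lhom_ext_single_one fun ⟨n, E⟩ => ?_
  simp only [LinearMap.add_apply, LinearMap.comp_apply, LinearMap.id_apply, collapse_single,
    disjoint_singleton_right, zeroOn_singleton]
  by_cases hu : u ∈ E
  · rw [sweep_single, if_pos hu, map_zero, zero_add, sweep_boundary_single_of_mem hu,
      if_neg (not_not.mpr hu), add_zero]
  · rw [if_pos hu, boundary_sweep_add_sweep_boundary_single_of_notMem hu]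

lemma collapse_empty : collapse (∅ : Finset V) = LinearMap.id :=
  Finsupp.lhom_ext_single_one fun ⟨n, E⟩ => by simp

lemma exists_homotopy_id_collapse (S : Finset V) :
    ∃ H : Chains V →ₗ[ZMod 2] Chains V,
      boundary ∘ₗ H + H ∘ₗ boundary = LinearMap.id + collapse S := by
  induction S using Finset.induction_on with
  | empty =>
    refine ⟨0, ?_⟩
    rw [collapse_empty, ZModModule.add_self (LinearMap.id : Chains V →ₗ[ZMod 2] Chains V)]
    simp
  | insert u S _ ih =>
    obtain ⟨H, hH⟩ := ih
    refine ⟨H + sweep u ∘ₗ collapse S, ?_⟩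
    calc boundary ∘ₗ (H + sweep u ∘ₗ collapse S) + (H + sweep u ∘ₗ collapse S) ∘ₗ boundary
        = (boundary ∘ₗ H + H ∘ₗ boundary)
            + (boundary ∘ₗ sweep u + sweep u ∘ₗ boundary) ∘ₗ collapse S := by
          refine LinearMap.ext fun x => ?_
          have hx := LinearMap.congr_fun (collapse_comp_boundary S) x
          simp only [LinearMap.add_apply, LinearMap.comp_apply, map_add] at hx ⊢
          rw [hx]
          abel
      _ = LinearMap.id + collapse S + (LinearMap.id + collapse {u}) ∘ₗ collapse S := by
          rw [hH, boundary_comp_sweep_add_sweep_comp_boundary]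
      _ = LinearMap.id + collapse (insert u S) := by
          rw [LinearMap.add_comp, LinearMap.id_comp, collapse_singleton_comp_collapse,
            ← add_assoc, add_assoc LinearMap.id, ZModModule.add_self (collapse S), add_zero]

lemma mem_range_boundary [Fintype V] {y : Chains V} (hd : boundary y = 0)
    (hc : collapse univ y = 0) : y ∈ LinearMap.range boundary := by
  obtain ⟨H, hH⟩ := exists_homotopy_id_collapse (univ : Finset V)
  have hy := LinearMap.congr_fun hH y
  simp only [LinearMap.add_apply, LinearMap.comp_apply, LinearMap.id_apply, hd, hc, map_zero,
    add_zero] at hy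
  exact ⟨H y, hy⟩

end LatticeCube

open LatticeCube

section Transfer

lemma NegDef.eq_zero_of_forall_sum_mul_eq_zero [Fintype V] {M : V → V → ℤ} (hneg : NegDef M)
    {n : V → ℤ} (h : ∀ w, ∑ v, n v * M v w = 0) : n = 0 := by
  by_contra hn
  have hx : (fun v => (n v : ℝ)) ≠ 0 := fun h0 =>
    hn (funext fun v => by simpa using congrFun h0 v)
  refine (hneg _ hx).ne ?_
  rw [sum_comm]
  refine sum_eq_zero fun w _ => ?_
  rw [← sum_mul]
  have hw : ∑ v, (M v w : ℝ) * n v = 0 := by exact_mod_cast (by simpa [mul_comm] using h w)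
  rw [hw, zero_mul]

variable [Fintype V] (M : V → V → ℤ) (K₀ : V → ℤ)

def toChar (n : V → ℤ) : {K : V → ℤ // CharCl M K₀ K} :=
  ⟨fun w => K₀ w + 2 * ∑ v, n v * M v w, n, fun _ => rfl⟩

lemma toChar_add_single [DecidableEq V] (n : V → ℤ) (v : V) :
    toChar M K₀ (n + Pi.single v 1) =
      ⟨fun w => (toChar M K₀ n).1 w + 2 * M v w,
        charCl_addDual M K₀ _ (toChar M K₀ n).2 v⟩ := by
  ext w
  simp only [toChar, Pi.add_apply, Pi.single_apply, add_mul, ite_mul, one_mul, zero_mul,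
    sum_add_distrib, sum_ite_eq', mem_univ, if_true]
  ring

lemma toChar_surjective : Surjective (toChar M K₀) :=
  fun ⟨_, n, hn⟩ => ⟨n, Subtype.ext (funext fun w => (hn w).symm)⟩

lemma toChar_injective (hneg : NegDef M) : Injective (toChar M K₀) := by
  intro a b hab
  rw [← sub_eq_zero]
  refine hneg.eq_zero_of_forall_sum_mul_eq_zero fun w => ?_
  have hw : K₀ w + 2 * ∑ v, a v * M v w = K₀ w + 2 * ∑ v, b v * M v w :=
    congrFun (congrArg Subtype.val hab) w
  simp only [Pi.sub_apply, sub_mul, sum_sub_distrib]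
  omega

variable {M}

noncomputable def charEquiv (hneg : NegDef M) : (V → ℤ) ≃ {K : V → ℤ // CharCl M K₀ K} :=
  Equiv.ofBijective (toChar M K₀) ⟨toChar_injective M K₀ hneg, toChar_surjective M K₀⟩

lemma charEquiv_symm_add_dual [DecidableEq V] (hneg : NegDef M)
    (K : {K : V → ℤ // CharCl M K₀ K}) (v : V) :
    (charEquiv K₀ hneg).symm ⟨fun w => K.1 w + 2 * M v w, charCl_addDual M K₀ K.1 K.2 v⟩ =
      (charEquiv K₀ hneg).symm K + Pi.single v 1 := by
  have hK : toChar M K₀ ((charEquiv K₀ hneg).symm K) = K :=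
    (charEquiv K₀ hneg).apply_symm_apply K
  rw [Equiv.symm_apply_eq]
  change _ = toChar M K₀ _
  rw [toChar_add_single, hK]

noncomputable def toCube (hneg : NegDef M) (k : ℕ) : Cbar M K₀ k →ₗ[ZMod 2] Chains V :=
  Finsupp.lmapDomain (ZMod 2) (ZMod 2) fun c => ((charEquiv K₀ hneg).symm c.1, c.2.1)

variable (M) in
noncomputable def ofCube (k : ℕ) : Chains V →ₗ[ZMod 2] Cbar M K₀ k :=
  Finsupp.lift _ _ _ fun c =>
    if h : c.2.card = k then Finsupp.single (toChar M K₀ c.1, ⟨c.2, h⟩) 1 else 0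

lemma toCube_single (hneg : NegDef M) (k : ℕ)
    (c : {K : V → ℤ // CharCl M K₀ K} × {E : Finset V // E.card = k}) :
    toCube K₀ hneg k (Finsupp.single c 1) =
      Finsupp.single ((charEquiv K₀ hneg).symm c.1, c.2.1) 1 :=
  Finsupp.mapDomain_single

lemma ofCube_single (k : ℕ) (n : V → ℤ) (E : Finset V) :
    ofCube M K₀ k (Finsupp.single (n, E) 1) =
      if h : E.card = k then Finsupp.single (toChar M K₀ n, ⟨E, h⟩) 1 else 0 := by
  simp [ofCube]

lemma dbar_single [DecidableEq V] (k : ℕ)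
    (c : {K : V → ℤ // CharCl M K₀ K} × {E : Finset V // E.card = k + 1}) :
    dbar M K₀ k (Finsupp.single c 1) = ∑ v ∈ c.2.1.attach,
      (Finsupp.single (c.1, ⟨c.2.1.erase v.1, by rw [card_erase_of_mem v.2, c.2.2]; rfl⟩) 1
        + Finsupp.single (⟨fun w => c.1.1 w + 2 * M v.1 w, charCl_addDual M K₀ c.1.1 c.1.2 v.1⟩,
          ⟨c.2.1.erase v.1, by rw [card_erase_of_mem v.2, c.2.2]; rfl⟩) 1) := by
  simp [dbar]

lemma ofCube_comp_toCube (hneg : NegDef M) (k : ℕ) :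
    ofCube M K₀ k ∘ₗ toCube K₀ hneg k = LinearMap.id := by
  refine Finsupp.lhom_ext_single_one fun ⟨K, E⟩ => ?_
  rw [LinearMap.comp_apply, toCube_single, ofCube_single, dif_pos E.2]
  exact congrArg (Finsupp.single · 1) (Prod.ext ((charEquiv K₀ hneg).apply_symm_apply K) rfl)

lemma toCube_comp_dbar [DecidableEq V] (hneg : NegDef M) (k : ℕ) :
    toCube K₀ hneg k ∘ₗ dbar M K₀ k = boundary ∘ₗ toCube K₀ hneg (k + 1) := by
  refine Finsupp.lhom_ext_single_one fun ⟨K, E⟩ => ?_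
  rw [LinearMap.comp_apply, LinearMap.comp_apply, dbar_single, map_sum, toCube_single,
    boundary_single]
  refine (sum_congr rfl fun v _ => ?_).trans (sum_attach E.1 _)
  rw [map_add, toCube_single, toCube_single, charEquiv_symm_add_dual]

lemma ofCube_comp_boundary [DecidableEq V] (k : ℕ) :
    ofCube M K₀ k ∘ₗ boundary = dbar M K₀ k ∘ₗ ofCube M K₀ (k + 1) := by
  refine Finsupp.lhom_ext_single_one fun ⟨n, E⟩ => ?_
  rw [LinearMap.comp_apply, LinearMap.comp_apply, boundary_single, map_sum, ofCube_single]
  split_ifs with hE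
  · rw [dbar_single]
    refine (sum_attach E _).symm.trans (sum_congr rfl fun v _ => ?_)
    have hv : (E.erase v).card = k := by rw [card_erase_of_mem v.2, hE]; rfl
    rw [map_add, ofCube_single, ofCube_single, dif_pos hv, dif_pos hv, toChar_add_single]
  · rw [map_zero]
    refine sum_eq_zero fun v hv => ?_
    have hv : (E.erase v).card ≠ k := by
      have := card_pos.mpr ⟨v, hv⟩
      rw [card_erase_of_mem hv]; omega
    rw [map_add, ofCube_single, ofCube_single, dif_neg hv, dif_neg hv, add_zero]

variable (M) in
noncomputable def augmentation : Cbar M K₀ 0 →ₗ[ZMod 2] ZMod 2 :=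
  Finsupp.linearCombination (ZMod 2) fun _ => 1

lemma augmentation_surjective : Surjective (augmentation M K₀) := fun a =>
  ⟨Finsupp.single (⟨K₀, 0, fun w => by simp⟩, ⟨∅, rfl⟩) a, by simp [augmentation]⟩

lemma augmentation_comp_dbar_zero [DecidableEq V] : augmentation M K₀ ∘ₗ dbar M K₀ 0 = 0 :=
  Finsupp.lhom_ext_single_one fun c => by
    simp [dbar_single, augmentation, ZModModule.add_self]

variable [DecidableEq V]

lemma boundary_comp_toCube_zero (hneg : NegDef M) : boundary ∘ₗ toCube K₀ hneg 0 = 0 :=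
  Finsupp.lhom_ext_single_one fun ⟨K, E⟩ => by
    simp [toCube_single, card_eq_zero.mp E.2]

lemma collapse_univ_comp_toCube_zero (hneg : NegDef M) :
    collapse univ ∘ₗ toCube K₀ hneg 0 =
      (augmentation M K₀).smulRight (Finsupp.single (0, ∅) 1) :=
  Finsupp.lhom_ext_single_one fun ⟨K, E⟩ => by
    simp [toCube_single, card_eq_zero.mp E.2, augmentation]

lemma collapse_univ_comp_toCube_succ (hneg : NegDef M) (k : ℕ) :
    collapse univ ∘ₗ toCube K₀ hneg (k + 1) = 0 :=
  Finsupp.lhom_ext_single_one fun ⟨K, E⟩ => by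
    have hE : E.1 ≠ ∅ := fun h => by simpa [h] using E.2
    simp [toCube_single, ← top_eq_univ, hE]

lemma mem_range_dbar_of_toCube (hneg : NegDef M) {k : ℕ} (x : Cbar M K₀ k)
    (hd : boundary (toCube K₀ hneg k x) = 0) (hc : collapse univ (toCube K₀ hneg k x) = 0) :
    x ∈ LinearMap.range (dbar M K₀ k) := by
  obtain ⟨z, hz⟩ := mem_range_boundary hd hc
  refine ⟨ofCube M K₀ (k + 1) z, ?_⟩
  calc dbar M K₀ k (ofCube M K₀ (k + 1) z) = ofCube M K₀ k (boundary z) :=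
        (LinearMap.congr_fun (ofCube_comp_boundary K₀ k) z).symm
    _ = x := by rw [hz, ← LinearMap.comp_apply, ofCube_comp_toCube, LinearMap.id_apply]

lemma range_dbar_zero (hneg : NegDef M) :
    LinearMap.range (dbar M K₀ 0) = LinearMap.ker (augmentation M K₀) := by
  refine le_antisymm (LinearMap.range_le_ker_iff.mpr (augmentation_comp_dbar_zero K₀))
    fun x hx => mem_range_dbar_of_toCube K₀ hneg x ?_ ?_
  · rw [← LinearMap.comp_apply, boundary_comp_toCube_zero, LinearMap.zero_apply]
  · rw [← LinearMap.comp_apply, collapse_univ_comp_toCube_zero, LinearMap.smulRight_apply,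
      LinearMap.mem_ker.mp hx, zero_smul]

lemma ker_dbar_le_range_dbar (hneg : NegDef M) (k : ℕ) :
    LinearMap.ker (dbar M K₀ k) ≤ LinearMap.range (dbar M K₀ (k + 1)) :=
  fun x hx => mem_range_dbar_of_toCube K₀ hneg x
    (by rw [← LinearMap.comp_apply, ← toCube_comp_dbar, LinearMap.comp_apply,
      LinearMap.mem_ker.mp hx, map_zero])
    (by rw [← LinearMap.comp_apply, collapse_univ_comp_toCube_succ, LinearMap.zero_apply])

end Transfer

theorem stmt16_general [Fintype V] [DecidableEq V] (M : V → V → ℤ)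
    (hneg : NegDef M)
    (K₀ : V → ℤ) :
    Nonempty ((Cbar M K₀ 0 ⧸ LinearMap.range (dbar M K₀ 0)) ≃ₗ[ZMod 2] ZMod 2) ∧
    ∀ k : ℕ, LinearMap.ker (dbar M K₀ k) ≤ LinearMap.range (dbar M K₀ (k + 1)) :=
  ⟨⟨(Submodule.quotEquivOfEq _ _ (range_dbar_zero K₀ hneg)).trans
      ((augmentation M K₀).quotKerEquivOfSurjective (augmentation_surjective K₀))⟩,
    ker_dbar_le_range_dbar K₀ hneg⟩

/-- the homology of the `U = 1` lattice complex is `𝔽` in degree `0` and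
vanishes in positive degrees. -/
theorem stmt16 [Fintype V] [DecidableEq V] (M : V → V → ℤ)
    (hsym : ∀ v w, M v w = M w v)
    (hoff : ∀ v w, v ≠ w → M v w = 0 ∨ M v w = 1)
    (hneg : NegDef M)
    (K₀ : V → ℤ) (hK₀ : IsChar M K₀) :
    Nonempty ((Cbar M K₀ 0 ⧸ LinearMap.range (dbar M K₀ 0)) ≃ₗ[ZMod 2] ZMod 2) ∧
    ∀ k : ℕ, LinearMap.ker (dbar M K₀ k) ≤ LinearMap.range (dbar M K₀ (k + 1)) :=
  stmt16_general M hneg K₀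
end
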